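/- arXiv:2011.14269 — 4 statements merged into one kernel-verified Lean document; each statement's English description precedes it below -/
import Mathlib

section
/- Let P be a probability measure on a measurable space X and let V1, V2 : X → ℝ be bounded measurable functions. Define the Gibbs measures Q_i = e^{-V_i} P / ∫ e^{-V_i} dP for i = 1, 2. Then KL(Q1 ‖ Q2) ≤ 2 ‖V1 − V2‖_{L∞(P)}. -/
/-!
The Gibbs measures are exponential tiltings of `P`, and tilting composes, so `Q₂` is the tilt of
`Q₁` by `f = V₁ - V₂`. For any tilt, `KL(Q ‖ Q.tilted f) = log 𝔼_Q[e^f] - 𝔼_Q[f]`, and if `|f| ≤ c`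
almost everywhere each of the two terms is at most `c`.
-/

open MeasureTheory Real

/-- The Gibbs (bias potential) distribution generated by potential `V` with base
distribution `P`: the measure with density `e^{-V} / ∫ e^{-V} dP` with respect to `P`. -/
noncomputable def gibbs {X : Type*} [MeasurableSpace X] (P : Measure X) (V : X → ℝ) :
    Measure X :=
  P.withDensity fun x => ENNReal.ofReal (Real.exp (-V x) / ∫ y, Real.exp (-V y) ∂P)

/-- The Kullback–Leibler divergence `KL(Q₁‖Q₂) = ∫ log (dQ₁/dQ₂) dQ₁`. -/
noncomputable def klDiv {X : Type*} [MeasurableSpace X] (Q1 Q2 : Measure X) : ℝ :=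
  ∫ x, Real.log ((Q1.rnDeriv Q2) x).toReal ∂Q1

open Filter

section Tilted

variable {α : Type*} {mα : MeasurableSpace α} {μ : Measure α} {f : α → ℝ}

lemma integral_llr_tilted_self [IsProbabilityMeasure μ] (hf : Integrable f μ)
    (hexp : Integrable (fun x ↦ exp (f x)) μ) :
    ∫ x, llr μ (μ.tilted f) x ∂μ = log (∫ x, exp (f x) ∂μ) - ∫ x, f x ∂μ := by
  have hllr_self : ∫ x, llr μ μ x ∂μ = 0 := by
    simp [integral_congr_ae (llr_self μ)]
  rw [integral_llr_tilted_right (Measure.AbsolutelyContinuous.refl μ) hf hexp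
    ((integrable_zero _ _ _).congr (llr_self μ).symm), hllr_self]
  ring

lemma integral_llr_tilted_self_le [IsProbabilityMeasure μ] {c : ℝ}
    (hf : AEStronglyMeasurable f μ) (hfc : ∀ᵐ x ∂μ, |f x| ≤ c) :
    ∫ x, llr μ (μ.tilted f) x ∂μ ≤ 2 * c := by
  have hf_int : Integrable f μ := .of_bound hf c hfc
  have hexp_le : ∀ᵐ x ∂μ, exp (f x) ≤ exp c := by
    filter_upwards [hfc] with x hx using exp_le_exp.mpr (abs_le.mp hx).2
  have hexp_int : Integrable (fun x ↦ exp (f x)) μ :=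
    .of_bound (continuous_exp.comp_aestronglyMeasurable hf) (exp c) <| by
      filter_upwards [hexp_le] with x hx
      rwa [norm_of_nonneg (exp_pos _).le]
  have hlog : log (∫ x, exp (f x) ∂μ) ≤ c := by
    rw [log_le_iff_le_exp (integral_exp_pos hexp_int)]
    simpa using integral_mono_ae hexp_int (integrable_const (exp c)) hexp_le
  have hmean : -c ≤ ∫ x, f x ∂μ := by
    simpa using integral_mono_ae (integrable_const (-c)) hf_int
      (hfc.mono fun x hx ↦ (abs_le.mp hx).1)
  rw [integral_llr_tilted_self hf_int hexp_int]
  linarith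

end Tilted

section Gibbs

variable {X : Type*} [MeasurableSpace X] {P : Measure X}

lemma klDiv_eq_integral_llr (Q₁ Q₂ : Measure X) : klDiv Q₁ Q₂ = ∫ x, llr Q₁ Q₂ x ∂Q₁ := rfl

lemma gibbs_eq_tilted (V : X → ℝ) : gibbs P V = P.tilted (-V) := rfl

lemma gibbs_eq_tilted_gibbs {V₁ V₂ : X → ℝ} (hV₁ : Integrable (fun x ↦ exp (-V₁ x)) P) :
    gibbs P V₂ = (gibbs P V₁).tilted (V₁ - V₂) := by
  rw [gibbs_eq_tilted, gibbs_eq_tilted, tilted_tilted (f := -V₁) hV₁]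
  congr 1
  ring

lemma integrable_exp_neg_of_le [IsFiniteMeasure P] {V : X → ℝ} {C : ℝ} (hV : Measurable V)
    (hC : ∀ x, C ≤ V x) :
    Integrable (fun x ↦ exp (-V x)) P :=
  .of_bound (measurable_exp.comp hV.neg).aestronglyMeasurable (exp (-C)) <|
    .of_forall fun x ↦ by
      rw [norm_of_nonneg (exp_pos _).le]
      exact exp_le_exp.mpr (neg_le_neg (hC x))

end Gibbs

/-- For bounded measurable potentials `V₁, V₂` and the associated Gibbs
measures `Qᵢ = e^{-Vᵢ} P / ∫ e^{-Vᵢ} dP`, one has `KL(Q₁‖Q₂) ≤ 2 ‖V₁ − V₂‖_{L∞(P)}`. -/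
theorem klDiv_gibbs_le {X : Type*} [MeasurableSpace X]
    (P : Measure X) [IsProbabilityMeasure P]
    (V1 V2 : X → ℝ) (hV1 : Measurable V1) (hV2 : Measurable V2)
    (hb1 : ∃ C : ℝ, ∀ x, |V1 x| ≤ C) (hb2 : ∃ C : ℝ, ∀ x, |V2 x| ≤ C) :
    klDiv (gibbs P V1) (gibbs P V2) ≤ 2 * essSup (fun x => |V1 x - V2 x|) P := by
  obtain ⟨C1, hC1⟩ := hb1
  obtain ⟨C2, hC2⟩ := hb2
  have hexp1 : Integrable (fun x ↦ exp (-V1 x)) P :=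
    integrable_exp_neg_of_le hV1 fun x ↦ neg_le_of_abs_le (hC1 x)
  have : IsProbabilityMeasure (gibbs P V1) := isProbabilityMeasure_tilted hexp1
  have hbdd : IsBoundedUnder (· ≤ ·) (ae P) fun x ↦ |V1 x - V2 x| :=
    isBoundedUnder_of ⟨C1 + C2, fun x ↦ (abs_sub _ _).trans (add_le_add (hC1 x) (hC2 x))⟩
  have hbound : ∀ᵐ x ∂(gibbs P V1), |(V1 - V2) x| ≤ essSup (fun x => |V1 x - V2 x|) P :=
    (tilted_absolutelyContinuous P _).ae_le (ae_le_essSup hbdd)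
  rw [klDiv_eq_integral_llr, gibbs_eq_tilted_gibbs (V₂ := V2) hexp1]
  exact integral_llr_tilted_self_le (hV1.sub hV2).aestronglyMeasurable hbound
end

section
/- Let K ⊆ ℝ^d be a compact set with positive Lebesgue measure, let P be the uniform probability measure on K, and let 𝒱 be a set of continuous functions on K that is dense in C(K) with the supremum norm. Then for every probability measure Q* on K that is absolutely continuous with respect to P with a continuous density, and for every ε > 0, there exists V ∈ 𝒱 such that KL(Q* ‖ Q_V) < ε, where Q_V is the probability measure with density e^{-V}/∫_K e^{-V} dP with respect to P. -/
/-!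
Approximate the potential `-log (q⁺ + δ)` uniformly on `K` to within `η` by some `V ∈ 𝒱`.
Then `e^{-V} ≤ e^η (q⁺ + δ)`, so the normalizer satisfies `Z ≤ e^η (1 + δ)`, while
wherever `q > 0` the log-likelihood ratio `log (dQ*/dQ_V) = log q + V + log Z` is at most
`log q - log (q + δ) + η + log Z ≤ η + log Z`. Integrating against `Q*` gives
`KL(Q*‖Q_V) ≤ 2η + log (1 + δ)`, which is below `ε` for `δ = η = ε / 8`.
-/

open MeasureTheory Real

open ProbabilityTheory
open scoped ENNReal

section

variable {X : Type*} [MeasurableSpace X] {P : Measure X}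

theorem klDiv_withDensity_ofReal_gibbs [SigmaFinite P] {q V : X → ℝ} (hq0 : ∀ x, 0 ≤ q x)
    (hq : AEMeasurable q P) (hV : Measurable V) (hZ : 0 < ∫ x, exp (-V x) ∂P) :
    klDiv (P.withDensity fun x => ENNReal.ofReal (q x)) (gibbs P V) =
      ∫ x, q x * (log (q x) + V x + log (∫ y, exp (-V y) ∂P)) ∂P := by
  set Z := ∫ y, exp (-V y) ∂P
  set w : X → ℝ≥0∞ := fun x => ENNReal.ofReal (exp (-V x) / Z)
  have hw : Measurable w := by fun_prop
  have hw0 : ∀ x, w x ≠ 0 := fun x => by positivity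
  have hrn : (P.withDensity fun x => ENNReal.ofReal (q x)).rnDeriv (gibbs P V)
      =ᵐ[P] fun x => (w x)⁻¹ * ENNReal.ofReal (q x) := by
    have : SigmaFinite (P.withDensity fun x => ENNReal.ofReal (q x)) :=
      SigmaFinite.withDensity_of_ne_top (ae_of_all _ fun _ => ENNReal.ofReal_ne_top)
    filter_upwards [Measure.rnDeriv_withDensity_right (P.withDensity fun x => ENNReal.ofReal (q x))
        P hw.aemeasurable (ae_of_all _ hw0) (ae_of_all _ fun _ => ENNReal.ofReal_ne_top),
      Measure.rnDeriv_withDensity₀ P hq.ennreal_ofReal] with x hright hleft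
    rw [gibbs, hright, hleft]
  rw [klDiv, integral_withDensity_eq_integral_toReal_smul₀ hq.ennreal_ofReal
    (ae_of_all _ fun _ => ENNReal.ofReal_lt_top)]
  refine integral_congr_ae ?_
  filter_upwards [hrn] with x hx
  rcases (hq0 x).eq_or_lt with hqx | hqx
  · simp [← hqx]
  rw [hx, ENNReal.toReal_mul, ENNReal.toReal_inv, ENNReal.toReal_ofReal (hq0 x),
    ENNReal.toReal_ofReal (by positivity), smul_eq_mul, inv_div, mul_comm (Z / _),
    ← mul_div_assoc, log_div (by positivity) (exp_ne_zero _), log_mul hqx.ne' hZ.ne', log_exp]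
  ring

theorem integral_le_of_ae_le_of_nonneg {f g : X → ℝ} {c : ℝ} (hg : Integrable g P)
    (hfg : f ≤ᵐ[P] g) (hgc : ∫ x, g x ∂P ≤ c) (hc : 0 ≤ c) : ∫ x, f x ∂P ≤ c := by
  by_cases hf : Integrable f P
  · exact (integral_mono_ae hf hg hfg).trans hgc
  · rwa [integral_undef hf]

theorem integral_eq_one_of_isProbabilityMeasure_withDensity {q : X → ℝ} (hq0 : ∀ x, 0 ≤ q x)
    (hq : AEStronglyMeasurable q P)
    [IsProbabilityMeasure (P.withDensity fun x => ENNReal.ofReal (q x))] :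
    ∫ x, q x ∂P = 1 := by
  rw [integral_eq_lintegral_of_nonneg_ae (ae_of_all _ hq0) hq, ← setLIntegral_univ,
    ← withDensity_apply _ MeasurableSet.univ, measure_univ, ENNReal.toReal_one]

theorem klDiv_gibbs_le_s3 [IsProbabilityMeasure P] {q V : X → ℝ} {δ η : ℝ}
    (hq0 : ∀ x, 0 ≤ q x) (hq1 : ∫ x, q x ∂P = 1) (hV : Measurable V) (hδ : 0 < δ)
    (hVq : ∀ᵐ x ∂P, |V x + log (q x + δ)| ≤ η) :
    klDiv (P.withDensity fun x => ENNReal.ofReal (q x)) (gibbs P V) ≤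
      2 * η + log (1 + δ) := by
  have hqi : Integrable q P := integrable_of_integral_eq_one hq1
  have hqδ : ∀ x, 0 < q x + δ := fun x => by linarith [hq0 x]
  have hexp : ∀ᵐ x ∂P, exp (-V x) ≤ exp η * (q x + δ) := by
    filter_upwards [hVq] with x hx
    rw [← exp_log (hqδ x), ← exp_add, exp_le_exp]
    linarith [(abs_le.1 hx).1]
  have hbound_int : Integrable (fun x => exp η * (q x + δ)) P :=
    (hqi.add (integrable_const δ)).const_mul _
  have hZi : Integrable (fun x => exp (-V x)) P :=
    hbound_int.mono' (by fun_prop) (by simpa only [norm_of_nonneg (exp_pos _).le] using hexp)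
  set Z := ∫ x, exp (-V x) ∂P
  have hZ : 0 < Z := integral_exp_pos hZi
  have hlogZ : log Z ≤ η + log (1 + δ) := by
    have hZle : Z ≤ exp η * (1 + δ) := by
      calc Z ≤ ∫ x, exp η * (q x + δ) ∂P := integral_mono_ae hZi hbound_int hexp
        _ = exp η * (1 + δ) := by
          rw [integral_const_mul, integral_add hqi (integrable_const δ), hq1]
          simp
    calc log Z ≤ log (exp η * (1 + δ)) := log_le_log hZ hZle
      _ = η + log (1 + δ) := by rw [log_mul (exp_ne_zero _) (by linarith), log_exp]
  have hη : 0 ≤ η := by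
    obtain ⟨x, hx⟩ := hVq.exists
    exact (abs_nonneg _).trans hx
  have hpointwise : ∀ᵐ x ∂P, q x * (log (q x) + V x + log Z) ≤ q x * (η + log Z) := by
    filter_upwards [hVq] with x hx
    rcases (hq0 x).eq_or_lt with hqx | hqx
    · simp [← hqx]
    have hlog : log (q x) ≤ log (q x + δ) := log_le_log hqx (by linarith)
    exact mul_le_mul_of_nonneg_left (by linarith [(abs_le.1 hx).2]) hqx.le
  rw [klDiv_withDensity_ofReal_gibbs hq0 hqi.aemeasurable hV hZ]
  refine integral_le_of_ae_le_of_nonneg (hqi.mul_const _) hpointwise ?_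
    (by linarith [log_nonneg (by linarith : (1 : ℝ) ≤ 1 + δ)])
  rw [integral_mul_const, hq1]
  linarith

end

/-- **universal approximation in KL divergence.** Let `K ⊆ ℝ^d` be compact
with positive Lebesgue measure, `P` the uniform probability measure on `K`, and `𝒱` a
class of continuous functions whose restrictions to `K` are dense in `C(K)` in the sup
norm. Then every probability measure `Q* = q · P` on `K` with continuous density `q`
can be approximated in KL divergence by Gibbs measures with potentials in `𝒱`:
for every `ε > 0` there is `V ∈ 𝒱` with `KL(Q*‖Q_V) < ε`. -/
theorem universal_approximation_kl {d : ℕ}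
    (K : Set (Fin d → ℝ)) (hK : IsCompact K) (hKpos : 0 < volume K)
    (P : Measure (Fin d → ℝ)) (hP : P = (volume K)⁻¹ • volume.restrict K)
    (𝒱 : Set ((Fin d → ℝ) → ℝ)) (h𝒱 : ∀ V ∈ 𝒱, Continuous V)
    (hdense : ∀ g : (Fin d → ℝ) → ℝ, ContinuousOn g K →
      ∀ ε > (0 : ℝ), ∃ V ∈ 𝒱, ∀ x ∈ K, |V x - g x| < ε)
    (Qstar : Measure (Fin d → ℝ)) [IsProbabilityMeasure Qstar]
    (q : (Fin d → ℝ) → ℝ) (hq : ContinuousOn q K)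
    (hQ : Qstar = P.withDensity fun x => ENNReal.ofReal (q x))
    (ε : ℝ) (hε : 0 < ε) :
    ∃ V ∈ 𝒱, klDiv Qstar (gibbs P V) < ε := by
  have hKm : MeasurableSet K := hK.isClosed.measurableSet
  replace hP : P = volume[|K] := hP
  have : IsProbabilityMeasure P :=
    hP ▸ cond_isProbabilityMeasure_of_finite hKpos.ne' hK.measure_lt_top.ne
  set p := fun x => max (q x) 0
  have hp0 : ∀ x, 0 ≤ p x := fun _ => le_max_right _ _
  have hp : ContinuousOn p K := hq.sup continuousOn_const
  have hpδ : ∀ x ∈ K, p x + ε / 8 ≠ 0 := fun x _ => by linarith [hp0 x]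
  replace hQ : Qstar = P.withDensity fun x => ENNReal.ofReal (p x) := by simp [hQ, p]
  subst hQ
  have hp1 : ∫ x, p x ∂P = 1 :=
    integral_eq_one_of_isProbabilityMeasure_withDensity hp0
      (hP ▸ (hp.aestronglyMeasurable hKm).smul_measure _)
  obtain ⟨V, hV𝒱, hV⟩ := hdense (fun x => -log (p x + ε / 8))
    ((hp.add continuousOn_const).log hpδ).neg (ε / 8) (by positivity)
  refine ⟨V, hV𝒱, ?_⟩
  have hVp : ∀ᵐ x ∂P, |V x + log (p x + ε / 8)| ≤ ε / 8 := by
    filter_upwards [hP ▸ ae_cond_mem hKm] with x hx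
    simpa using (hV x hx).le
  calc klDiv _ (gibbs P V) ≤ 2 * (ε / 8) + log (1 + ε / 8) :=
        klDiv_gibbs_le_s3 hp0 hp1 (h𝒱 V hV𝒱).measurable (by positivity) hVp
    _ ≤ 2 * (ε / 8) + ε / 8 := by
        linarith [log_le_sub_one_of_pos (by positivity : 0 < 1 + ε / 8)]
    _ < ε := by linarith
end

section
/- Let K ⊆ ℝ^d be a compact set with positive Lebesgue measure, let P be the uniform probability measure on K, and let 𝒱 be a set of continuous functions on K that is dense in C(K) with the supremum norm. Then for every probability measure Q* on K that is absolutely continuous with respect to Lebesgue measure, and for every ε > 0, there exists V ∈ 𝒱 such that the total variation distance between Q* and Q_V is less than ε, where Q_V is the probability measure with density e^{-V}/∫_K e^{-V} dP with respect to P. -/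
open MeasureTheory Real

/-- The total variation distance `sup_A |Q₁(A) − Q₂(A)|` between two (finite) measures. -/
noncomputable def tvDist {X : Type*} [MeasurableSpace X] (Q1 Q2 : Measure X) : ℝ :=
  ⨆ A : {A : Set X // MeasurableSet A}, |(Q1 A).toReal - (Q2 A).toReal|

/-!
The density `f = dQ*/dP` lies in `L¹(P)`, so it is `L¹`-close to a continuous function, which
may be taken strictly positive (replace `g` by `|g| + δ`, which costs at most `δ` since `f ≥ 0`).
A positive continuous `g` is `-log` of a continuous function, so density of `𝒱` in `C(K)` yields
`V ∈ 𝒱` with `e^{-V}` uniformly close to `g` on `K`, the support of `P`. Normalizing `e^{-V}`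
into the Gibbs density at most doubles the `L¹` error, and the total variation distance of two
measures with densities is bounded by the `L¹` distance of the densities.
-/

section L1

variable {X : Type*} [MeasurableSpace X] {P : Measure X}

lemma integral_abs_sub_le_add {f g h : X → ℝ} (hf : Integrable f P) (hg : Integrable g P)
    (hh : Integrable h P) :
    ∫ x, |f x - h x| ∂P ≤ ∫ x, |f x - g x| ∂P + ∫ x, |g x - h x| ∂P := by
  calc ∫ x, |f x - h x| ∂P ≤ ∫ x, (|f x - g x| + |g x - h x|) ∂P :=
        integral_mono (hf.sub hh).abs ((hf.sub hg).abs.add (hg.sub hh).abs)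
          fun x => abs_sub_le (f x) (g x) (h x)
    _ = ∫ x, |f x - g x| ∂P + ∫ x, |g x - h x| ∂P := integral_add (hf.sub hg).abs (hg.sub hh).abs

/-- The normalizing constant `∫ h` is itself within the `L¹` error of `1`. -/
lemma integral_abs_sub_div_integral_le {f h : X → ℝ} (hf : Integrable f P)
    (hh : Integrable h P) (hh0 : 0 ≤ᵐ[P] h) (hf1 : ∫ x, f x ∂P = 1) (hZ : 0 < ∫ x, h x ∂P) :
    ∫ x, |f x - h x / ∫ y, h y ∂P| ∂P ≤ 2 * ∫ x, |f x - h x| ∂P := by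
  set Z := ∫ y, h y ∂P
  have hZ1 : |Z - 1| ≤ ∫ x, |f x - h x| ∂P := by
    rw [abs_sub_comm, ← hf1, ← integral_sub hf hh]
    exact abs_integral_le_integral_abs
  have hnorm : ∫ x, |h x - h x / Z| ∂P = |Z - 1| := by
    have hpt : ∀ᵐ x ∂P, |h x - h x / Z| = |1 - 1 / Z| * h x := by
      filter_upwards [hh0] with x hx
      rw [← abs_of_nonneg hx, ← abs_mul, abs_of_nonneg hx]
      ring_nf
    rw [integral_congr_ae hpt, integral_const_mul,
      show Z - 1 = (1 - 1 / Z) * Z by field_simp, abs_mul, abs_of_pos hZ]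
  calc ∫ x, |f x - h x / Z| ∂P ≤ ∫ x, |f x - h x| ∂P + ∫ x, |h x - h x / Z| ∂P :=
        integral_abs_sub_le_add hf hh (hh.div_const Z)
    _ ≤ 2 * ∫ x, |f x - h x| ∂P := by linarith

lemma tvDist_withDensity_le {f g : X → ℝ} (hf : Integrable f P) (hg : Integrable g P)
    (hf0 : ∀ x, 0 ≤ f x) (hg0 : ∀ x, 0 ≤ g x) :
    tvDist (P.withDensity fun x => ENNReal.ofReal (f x))
      (P.withDensity fun x => ENNReal.ofReal (g x)) ≤ ∫ x, |f x - g x| ∂P := by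
  have hmeasure {u : X → ℝ} (hu : Integrable u P) (hu0 : ∀ x, 0 ≤ u x) {A : Set X}
      (hA : MeasurableSet A) :
      ((P.withDensity fun x => ENNReal.ofReal (u x)) A).toReal = ∫ x in A, u x ∂P := by
    rw [withDensity_apply _ hA, ← ofReal_integral_eq_lintegral_ofReal hu.integrableOn
      (ae_of_all _ hu0), ENNReal.toReal_ofReal (integral_nonneg hu0)]
  refine ciSup_le fun ⟨A, hA⟩ => ?_
  rw [hmeasure hf hf0 hA, hmeasure hg hg0 hA, ← integral_sub hf.integrableOn hg.integrableOn]
  calc |∫ x in A, (f x - g x) ∂P| ≤ ∫ x in A, |f x - g x| ∂P := abs_integral_le_integral_abs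
    _ ≤ ∫ x, |f x - g x| ∂P :=
      setIntegral_le_integral (hf.sub hg).abs (ae_of_all _ fun x => abs_nonneg _)

end L1

lemma MeasureTheory.Measure.withDensity_ofReal_toReal_rnDeriv {X : Type*} [MeasurableSpace X]
    {μ ν : Measure X} [IsFiniteMeasure ν] [SigmaFinite μ] (h : ν ≪ μ) :
    μ.withDensity (fun x => ENNReal.ofReal (ν.rnDeriv μ x).toReal) = ν := by
  conv_rhs => rw [← Measure.withDensity_rnDeriv_eq ν μ h]
  refine withDensity_congr_ae ?_
  filter_upwards [ν.rnDeriv_lt_top μ] with x hx using ENNReal.ofReal_toReal hx.ne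

/-- If `|V - (-log g)| < η ≤ 1` then `e^{-V} = g e^{-log g - V}` is within `2 η g` of `g`. -/
lemma exists_abs_exp_neg_sub_lt {X : Type*} [TopologicalSpace X] {K : Set X} (hK : IsCompact K)
    {𝒱 : Set (X → ℝ)}
    (hdense : ∀ g : X → ℝ, ContinuousOn g K → ∀ ε > (0 : ℝ), ∃ V ∈ 𝒱, ∀ x ∈ K, |V x - g x| < ε)
    {g : X → ℝ} (hg : ContinuousOn g K) (hg0 : ∀ x ∈ K, 0 < g x) {δ : ℝ} (hδ : 0 < δ) :
    ∃ V ∈ 𝒱, ∀ x ∈ K, |exp (-V x) - g x| < δ := by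
  obtain ⟨M, hM⟩ := hK.exists_bound_of_continuousOn hg
  set η := min 1 (δ / (2 * (|M| + 1)))
  obtain ⟨V, hV𝒱, hV⟩ := hdense (fun x => -log (g x))
    (hg.log fun x hx => (hg0 x hx).ne').neg η (by positivity)
  refine ⟨V, hV𝒱, fun x hx => ?_⟩
  set t := -log (g x) - V x
  have ht : |t| < η := by rw [abs_sub_comm]; exact hV x hx
  have hgM : g x ≤ |M| + 1 := by
    linarith [le_abs_self (g x), (Real.norm_eq_abs (g x)) ▸ hM x hx, le_abs_self M]
  have hexp : exp (-V x) - g x = g x * (exp t - 1) := by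
    have : g x * exp t = exp (-V x) := by
      rw [show t = -log (g x) + -V x by ring, exp_add, exp_neg (log (g x)), exp_log (hg0 x hx)]
      field_simp [(hg0 x hx).ne']
    rw [← this]
    ring
  calc |exp (-V x) - g x| = g x * |exp t - 1| := by rw [hexp, abs_mul, abs_of_pos (hg0 x hx)]
    _ ≤ (|M| + 1) * (2 * |t|) :=
      mul_le_mul hgM (abs_exp_sub_one_le (ht.le.trans (min_le_left _ _))) (abs_nonneg _)
        (by positivity)
    _ < (|M| + 1) * (2 * η) := by gcongr
    _ ≤ δ := by
      have : η ≤ δ / (2 * (|M| + 1)) := min_le_right _ _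
      rw [le_div_iff₀ (by positivity)] at this
      linarith

section Approximation

variable {X : Type*} [TopologicalSpace X] [NormalSpace X] [MeasurableSpace X] [BorelSpace X]
  {P : Measure X} [IsProbabilityMeasure P] [P.WeaklyRegular]

lemma MeasureTheory.Integrable.exists_continuous_pos_integral_abs_sub_le {f : X → ℝ}
    (hf : Integrable f P) (hf0 : 0 ≤ᵐ[P] f) {δ : ℝ} (hδ : 0 < δ) :
    ∃ g : X → ℝ, Continuous g ∧ (∀ x, 0 < g x) ∧ Integrable g P ∧ ∫ x, |f x - g x| ∂P ≤ δ := by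
  obtain ⟨g, hfg, hgi⟩ := hf.exists_boundedContinuous_integral_sub_le (half_pos hδ)
  simp only [Real.norm_eq_abs] at hfg
  refine ⟨fun x => |g x| + δ / 2, by fun_prop, fun x => by positivity,
    hgi.abs.add (integrable_const _), ?_⟩
  have hfgi : Integrable (fun x => |f x - g x|) P := (hf.sub hgi).abs
  have hpt : ∀ᵐ x ∂P, |f x - (|g x| + δ / 2)| ≤ |f x - g x| + δ / 2 := by
    filter_upwards [hf0] with x hx
    have := abs_abs_sub_abs_le_abs_sub (f x) (g x)
    rw [abs_of_nonneg hx] at this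
    have := abs_sub (f x - |g x|) (δ / 2)
    rw [abs_of_pos (half_pos hδ)] at this
    rw [show f x - (|g x| + δ / 2) = f x - |g x| - δ / 2 by ring]
    linarith
  calc ∫ x, |f x - (|g x| + δ / 2)| ∂P ≤ ∫ x, (|f x - g x| + δ / 2) ∂P :=
        integral_mono_ae (hf.sub (hgi.abs.add (integrable_const _))).abs
          (hfgi.add (integrable_const _)) hpt
    _ = ∫ x, |f x - g x| ∂P + δ / 2 := by
        rw [integral_add hfgi (integrable_const _)]
        simp
    _ ≤ δ := by linarith

theorem exists_tvDist_withDensity_gibbs_lt {K : Set X} (hK : IsCompact K)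
    (hPK : ∀ᵐ x ∂P, x ∈ K) {𝒱 : Set (X → ℝ)} (h𝒱 : ∀ V ∈ 𝒱, Continuous V)
    (hdense : ∀ g : X → ℝ, ContinuousOn g K → ∀ ε > (0 : ℝ), ∃ V ∈ 𝒱, ∀ x ∈ K, |V x - g x| < ε)
    {f : X → ℝ} (hf : Integrable f P) (hf0 : ∀ x, 0 ≤ f x) (hf1 : ∫ x, f x ∂P = 1)
    {ε : ℝ} (hε : 0 < ε) :
    ∃ V ∈ 𝒱, tvDist (P.withDensity fun x => ENNReal.ofReal (f x)) (gibbs P V) < ε := by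
  obtain ⟨g, hg, hg0, hgi, hfg⟩ :=
    hf.exists_continuous_pos_integral_abs_sub_le (ae_of_all _ hf0) (by positivity : 0 < ε / 5)
  obtain ⟨V, hV𝒱, hVg⟩ := exists_abs_exp_neg_sub_lt hK hdense hg.continuousOn
    (fun x _ => hg0 x) (by positivity : 0 < ε / 5)
  have hexpi : Integrable (fun x => exp (-V x)) P := by
    refine (hgi.add (integrable_const (ε / 5))).mono'
      (continuous_exp.comp (h𝒱 V hV𝒱).neg).aestronglyMeasurable ?_
    filter_upwards [hPK] with x hx
    rw [Real.norm_eq_abs, abs_of_pos (exp_pos _)]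
    show _ ≤ g x + ε / 5
    linarith [(abs_lt.mp (hVg x hx)).2]
  have hgV : ∫ x, |g x - exp (-V x)| ∂P ≤ ε / 5 := by
    calc ∫ x, |g x - exp (-V x)| ∂P ≤ ∫ _, ε / 5 ∂P := by
          refine integral_mono_ae (hgi.sub hexpi).abs (integrable_const _) ?_
          filter_upwards [hPK] with x hx
          rw [abs_sub_comm]
          exact (hVg x hx).le
      _ = ε / 5 := by simp
  have hfV : ∫ x, |f x - exp (-V x) / ∫ y, exp (-V y) ∂P| ∂P ≤ 2 * (ε / 5 + ε / 5) :=
    (integral_abs_sub_div_integral_le hf hexpi (ae_of_all _ fun x => (exp_pos _).le) hf1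
      (integral_exp_pos hexpi)).trans
      (by gcongr; exact (integral_abs_sub_le_add hf hgi hexpi).trans (add_le_add hfg hgV))
  refine ⟨V, hV𝒱, ?_⟩
  calc tvDist (P.withDensity fun x => ENNReal.ofReal (f x)) (gibbs P V)
      ≤ ∫ x, |f x - exp (-V x) / ∫ y, exp (-V y) ∂P| ∂P :=
        tvDist_withDensity_le hf (hexpi.div_const _) hf0 fun x => by positivity
    _ < ε := by linarith

end Approximation

/-- **universal approximation in total variation.** Let `K ⊆ ℝ^d` be compact
with positive Lebesgue measure, `P` the uniform probability measure on `K`, and `𝒱` a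
class of continuous functions whose restrictions to `K` are dense in `C(K)` in the sup
norm. Then every probability measure `Q*` on `K` absolutely continuous with respect to
Lebesgue measure can be approximated in total variation distance by Gibbs measures with
potentials in `𝒱`. -/
theorem universal_approximation_tv {d : ℕ}
    (K : Set (Fin d → ℝ)) (hK : IsCompact K) (hKpos : 0 < volume K)
    (P : Measure (Fin d → ℝ)) (hP : P = (volume K)⁻¹ • volume.restrict K)
    (𝒱 : Set ((Fin d → ℝ) → ℝ)) (h𝒱 : ∀ V ∈ 𝒱, Continuous V)
    (hdense : ∀ g : (Fin d → ℝ) → ℝ, ContinuousOn g K →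
      ∀ ε > (0 : ℝ), ∃ V ∈ 𝒱, ∀ x ∈ K, |V x - g x| < ε)
    (Qstar : Measure (Fin d → ℝ)) [IsProbabilityMeasure Qstar]
    (hQK : Qstar Kᶜ = 0) (hac : Qstar ≪ volume)
    (ε : ℝ) (hε : 0 < ε) :
    ∃ V ∈ 𝒱, tvDist Qstar (gibbs P V) < ε := by
  have hKfin : volume K ≠ ⊤ := hK.measure_lt_top.ne
  have hPcond : P = ProbabilityTheory.cond volume K := hP
  have : IsProbabilityMeasure P :=
    hPcond ▸ ProbabilityTheory.cond_isProbabilityMeasure_of_finite hKpos.ne' hKfin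
  have hPK : ∀ᵐ x ∂P, x ∈ K := hPcond ▸ ProbabilityTheory.ae_cond_mem hK.measurableSet
  have hQP : Qstar ≪ P := by
    rw [← Measure.restrict_eq_self_of_ae_mem (ae_iff.2 hQK), hP]
    exact (hac.restrict K).trans (Measure.absolutelyContinuous_smul (ENNReal.inv_ne_zero.2 hKfin))
  have hf1 : ∫ x, (Qstar.rnDeriv P x).toReal ∂P = 1 := by
    rw [Measure.integral_toReal_rnDeriv hQP, probReal_univ]
  have := exists_tvDist_withDensity_gibbs_lt hK hPK h𝒱 hdense Measure.integrable_toReal_rnDeriv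
    (fun _ => ENNReal.toReal_nonneg) hf1 hε
  rwa [Measure.withDensity_ofReal_toReal_rnDeriv hQP] at this
end

section
/- Let H be a real Hilbert space, let L : H → ℝ be convex and Fréchet differentiable with ‖∇L(x)‖ ≤ l for all x (i.e. Lipschitz constant l), and let h : H → ℝ be Fréchet differentiable with ‖∇h(x)‖ ≤ ε for all x (i.e. Lipschitz constant ε). Let x_t and y_t be differentiable curves in H with x_0 = y_0, dx_t/dt = −∇L(x_t), and dy_t/dt = −∇(L + h)(y_t). Then for all t ≥ 0, L(y_t) − L(x_t) ≤ l ε t. -/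
/-!
Let `x` follow the gradient flow of `L` and `y` that of `L + h`. Monotonicity of the gradient
of the convex function `L` makes the `L`-parts of the two velocities push `y - x` no further
apart, so `‖y - x‖` can only grow at the rate `‖∇h‖ ≤ ε` and stays below `ε t`. The
subgradient inequality at `y t` then gives `L (y t) - L (x t) ≤ ⟪∇L (y t), y t - x t⟫ ≤ l ε t`.
-/

open Set AffineMap
open scoped RealInnerProductSpace

section Subgradient

variable {E : Type*} [NormedAddCommGroup E] [NormedSpace ℝ E]
  {s : Set E} {f : E → ℝ} {f' : E →L[ℝ] ℝ} {a b : E}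

theorem ConvexOn.le_sub_of_hasFDerivAt (hf : ConvexOn ℝ s f) (ha : a ∈ s) (hb : b ∈ s)
    (hd : HasFDerivAt f f' a) : f' (b - a) ≤ f b - f a := by
  have hline : ConvexOn ℝ ((lineMap a b : ℝ →ᵃ[ℝ] E) ⁻¹' s) (f ∘ (lineMap a b : ℝ →ᵃ[ℝ] E)) :=
    hf.comp_affineMap _
  have hderiv : HasDerivAt (f ∘ (lineMap a b : ℝ →ᵃ[ℝ] E)) (f' (b - a)) 0 :=
    (lineMap_apply_zero (k := ℝ) a b ▸ hd).comp_hasDerivAt 0 hasDerivAt_lineMap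
  simpa [slope] using
    hline.le_slope_of_hasDerivAt (by simpa using ha) (by simpa using hb) zero_lt_one hderiv

end Subgradient

section Gradient

variable {F : Type*} [NormedAddCommGroup F] [InnerProductSpace ℝ F] [CompleteSpace F]
  {s : Set F} {f : F → ℝ} {a b ga gb : F}

theorem ConvexOn.inner_gradient_le_sub (hf : ConvexOn ℝ s f) (ha : a ∈ s) (hb : b ∈ s)
    (hd : HasGradientAt f ga a) : ⟪ga, b - a⟫ ≤ f b - f a := by
  simpa using hf.le_sub_of_hasFDerivAt ha hb hd.hasFDerivAt

theorem ConvexOn.inner_gradient_sub_gradient_nonneg (hf : ConvexOn ℝ s f) (ha : a ∈ s)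
    (hb : b ∈ s) (hda : HasGradientAt f ga a) (hdb : HasGradientAt f gb b) :
    0 ≤ ⟪ga - gb, a - b⟫ := by
  have hab := hf.inner_gradient_le_sub ha hb hda
  have hba := hf.inner_gradient_le_sub hb ha hdb
  rw [← neg_sub a b, inner_neg_right] at hab
  rw [inner_sub_left]
  linarith

/-- `-(gb + v) - -ga` is the difference of the velocities of the gradient flows of `f + h` at `b`
and of `f` at `a`, where `v = ∇h b`. -/
theorem ConvexOn.inner_sub_perturbed_gradient_le (hf : ConvexOn ℝ s f) (ha : a ∈ s)
    (hb : b ∈ s) (hda : HasGradientAt f ga a) (hdb : HasGradientAt f gb b) (v : F) :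
    ⟪b - a, -(gb + v) - -ga⟫ ≤ ‖b - a‖ * ‖v‖ := by
  have hmono := hf.inner_gradient_sub_gradient_nonneg hb ha hdb hda
  have hsplit : ⟪b - a, -(gb + v) - -ga⟫ = -⟪gb - ga, b - a⟫ - ⟪b - a, v⟫ := by
    rw [real_inner_comm (b - a)]
    simp only [inner_sub_right, inner_neg_right, inner_add_right]
    ring
  linarith [(neg_le_abs _).trans (abs_real_inner_le_norm (b - a) v)]

end Gradient

section NormGrowth

variable {E : Type*} [NormedAddCommGroup E] [InnerProductSpace ℝ E]
  {u u' : ℝ → E} {ε δ : ℝ}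

/-- `√(‖u‖² + δ²)` is a smooth stand-in for `‖u‖`, which need not be differentiable where
`u` vanishes. -/
theorem hasDerivAt_sqrt_norm_sq_add_sq (hδ : δ ≠ 0) (hu : ∀ s, HasDerivAt u (u' s) s) (s : ℝ) :
    HasDerivAt (fun s => √(‖u s‖ ^ 2 + δ ^ 2))
      (⟪u s, u' s⟫ / √(‖u s‖ ^ 2 + δ ^ 2)) s := by
  have hpos : 0 < ‖u s‖ ^ 2 + δ ^ 2 := by positivity
  convert ((hu s).norm_sq.add_const (δ ^ 2)).sqrt hpos.ne' using 1
  field_simp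

theorem norm_le_norm_add_mul_of_inner_deriv_le (hε : 0 ≤ ε)
    (hu : ∀ s, HasDerivAt u (u' s) s) (hbound : ∀ s, ⟪u s, u' s⟫ ≤ ε * ‖u s‖)
    {t : ℝ} (ht : 0 ≤ t) : ‖u t‖ ≤ ‖u 0‖ + ε * t := by
  refine le_of_forall_pos_le_add fun δ hδ => ?_
  set ψ : ℝ → ℝ := fun s => √(‖u s‖ ^ 2 + δ ^ 2)
  have hψ := hasDerivAt_sqrt_norm_sq_add_sq hδ.ne' hu
  have hnorm_le_ψ : ∀ s, ‖u s‖ ≤ ψ s := fun s =>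
    Real.le_sqrt_of_sq_le (le_add_of_nonneg_right (sq_nonneg δ))
  have hψ_deriv_le : ∀ s, deriv ψ s ≤ ε := by
    intro s
    have hψ_pos : 0 < ψ s := Real.sqrt_pos.2 (by positivity)
    rw [(hψ s).deriv, div_le_iff₀ hψ_pos]
    exact (hbound s).trans (mul_le_mul_of_nonneg_left (hnorm_le_ψ s) hε)
  have hψ0 : ψ 0 ≤ ‖u 0‖ + δ :=
    (Real.sqrt_le_left (by positivity)).2 (by nlinarith [norm_nonneg (u 0)])
  have hψt := image_sub_le_mul_sub_of_deriv_le (fun s => (hψ s).differentiableAt)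
    hψ_deriv_le ht
  linarith [hnorm_le_ψ t]

end NormGrowth

theorem perturbed_convex_gradient_flow_general
    {H : Type*} [NormedAddCommGroup H] [InnerProductSpace ℝ H] [CompleteSpace H]
    (L : H → ℝ) (gL gh : H → H) (l ε : ℝ)
    (hconv : ConvexOn ℝ Set.univ L)
    (hgL : ∀ x, HasGradientAt L (gL x) x)
    (hl : ∀ x, ‖gL x‖ ≤ l) (hε : ∀ x, ‖gh x‖ ≤ ε)
    (x y : ℝ → H) (hinit : x 0 = y 0)
    (hx : ∀ t, HasDerivAt x (-gL (x t)) t)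
    (hy : ∀ t, HasDerivAt y (-(gL (y t) + gh (y t))) t)
    (t : ℝ) (ht : 0 ≤ t) :
    L (y t) - L (x t) ≤ l * ε * t := by
  have hvelocity : ∀ s, ⟪y s - x s, -(gL (y s) + gh (y s)) - -gL (x s)⟫ ≤ ε * ‖y s - x s‖ :=
    fun s => (hconv.inner_sub_perturbed_gradient_le (mem_univ _) (mem_univ _) (hgL (x s))
      (hgL (y s)) (gh (y s))).trans <| by rw [mul_comm]; gcongr; exact hε _
  have hgap : ‖y t - x t‖ ≤ ε * t := by
    simpa [hinit] using norm_le_norm_add_mul_of_inner_deriv_le ((norm_nonneg _).trans (hε 0))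
      (fun s => (hy s).sub (hx s)) hvelocity ht
  have hsub := hconv.inner_gradient_le_sub (mem_univ (y t)) (mem_univ (x t)) (hgL (y t))
  rw [← neg_sub (y t) (x t), inner_neg_right] at hsub
  calc L (y t) - L (x t) ≤ ⟪gL (y t), y t - x t⟫ := by linarith
    _ ≤ ‖gL (y t)‖ * ‖y t - x t‖ := real_inner_le_norm _ _
    _ ≤ l * (ε * t) := mul_le_mul (hl _) hgap (norm_nonneg _) ((norm_nonneg _).trans (hl 0))
    _ = l * ε * t := by ring

/-- **perturbed convex gradient flow.** Let `L` be a convex Fréchet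
differentiable function on a real Hilbert space with gradient bounded by `l` (Lipschitz
constant `l`), and let `h` be Fréchet differentiable with gradient bounded by `ε`.
If `x_t` is the gradient flow of `L` and `y_t` the gradient flow of `L + h` with
`x_0 = y_0`, then `L(y_t) − L(x_t) ≤ l ε t` for all `t ≥ 0`. -/
theorem perturbed_convex_gradient_flow
    {H : Type*} [NormedAddCommGroup H] [InnerProductSpace ℝ H] [CompleteSpace H]
    (L h : H → ℝ) (gL gh : H → H) (l ε : ℝ)
    (hconv : ConvexOn ℝ Set.univ L)
    (hgL : ∀ x, HasGradientAt L (gL x) x)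
    (hgh : ∀ x, HasGradientAt h (gh x) x)
    (hl : ∀ x, ‖gL x‖ ≤ l) (hε : ∀ x, ‖gh x‖ ≤ ε)
    (x y : ℝ → H) (hinit : x 0 = y 0)
    (hx : ∀ t, HasDerivAt x (-gL (x t)) t)
    (hy : ∀ t, HasDerivAt y (-(gL (y t) + gh (y t))) t)
    (t : ℝ) (ht : 0 ≤ t) :
    L (y t) - L (x t) ≤ l * ε * t :=
  perturbed_convex_gradient_flow_general L gL gh l ε hconv hgL hl hε x y hinit hx hy t ht
end
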